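/- Let g be a kernel on N = {1,…,n}, let m be a positive integer, let I₀ ⊆ I₁ ⊆ N, let z : I₀ → M_m(ℂ), and let P be the orthogonal projection of H_{g,m}(I₁) onto H_{g,m}(I₀,I₁) = H_{g,m}(I₁) ⊖ H_{g,m}(I₁∖I₀). If z̃₁ and z̃₂ are any two extensions of z to I₁ (i.e. z̃₁, z̃₂ : I₁ → M_m(ℂ) with z̃₁|_{I₀} = z̃₂|_{I₀} = z), then P·T_{g,z̃₁}x = P·T_{g,z̃₂}x for every x ∈ H_{g,m}(I₀,I₁); that is, the compression T_{g,z}(I₁) = P·T_{g,z̃}|_{H_{g,m}(I₀,I₁)} depends only on z and I₁ and not on the choice of extension z̃. -/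

import Mathlib

/-!
On a generator `a ⊗ gᵢ` of `H_{g,m}(I₁)`, the difference `T_{g,z̃₁} - T_{g,z̃₂}` vanishes when
`i ∈ I₀` and gives a multiple of `gᵢ` with `i ∈ I₁ \ I₀` otherwise, so it maps `H_{g,m}(I₁)` into
`H_{g,m}(I₁ \ I₀)`. That space is orthogonal to `H_{g,m}(I₀,I₁)` by construction, so `P` kills
the difference.
-/

open Matrix
open scoped ComplexOrder

noncomputable section

/-- `g` is a kernel on `N = {1,…,n}`: the matrix `(g i j)` is positive semidefinite and
its restriction to the support `spt g = {i | g i i ≠ 0}` is positive definite. -/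
def IsDiscreteKernel (n : ℕ) (g : Fin n → Fin n → ℂ) : Prop :=
  (Matrix.of g).PosSemidef ∧
    (Matrix.of fun i j : {i : Fin n // g i i ≠ 0} => g i.1 j.1).PosDef

variable {n m : ℕ} (E : Type*) [NormedAddCommGroup E] [InnerProductSpace ℂ E]
  [FiniteDimensional ℂ E]

/-- `H_{g,m}(I) ⊆ ℂ^m ⊗ H_g`: the span of the vectors `a ⊗ gᵢ` for `a ∈ ℂ^m` and
`i ∈ I ∩ spt g`, realized inside `(ℂ^m ⊗ E, ‖·‖₂)` via vectors `v i` realizing the Gram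
matrix `g`. -/
def Hgm (g : Fin n → Fin n → ℂ) (v : Fin n → E) (m : ℕ) (I : Set (Fin n)) :
    Submodule ℂ (PiLp 2 fun _ : Fin m => E) :=
  Submodule.span ℂ {x | ∃ (a : Fin m → ℂ) (i : Fin n), i ∈ I ∧ g i i ≠ 0 ∧
    x = (WithLp.equiv 2 (∀ _ : Fin m, E)).symm fun k => a k • v i}

/-- `T` is the operator `T_{g,z}` on `H_{g,m}(I)`, i.e. it satisfies
`T (a ⊗ gᵢ) = (z(i)* a) ⊗ gᵢ` for all `a ∈ ℂ^m` and `i ∈ I ∩ spt g`. -/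
def IsTgz (g : Fin n → Fin n → ℂ) (v : Fin n → E) (I : Set (Fin n))
    (z : Fin n → Matrix (Fin m) (Fin m) ℂ)
    (T : Hgm E g v m I →L[ℂ] Hgm E g v m I) : Prop :=
  ∀ i ∈ I, g i i ≠ 0 → ∀ a : Fin m → ℂ,
    ∀ hx : (WithLp.equiv 2 (∀ _ : Fin m, E)).symm (fun k => a k • v i) ∈ Hgm E g v m I,
      (T ⟨_, hx⟩ : PiLp 2 fun _ : Fin m => E) =
        (WithLp.equiv 2 (∀ _ : Fin m, E)).symm fun k => ((z i)ᴴ.mulVec a) k • v i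

/-- `H_{g,m}(I₀,I₁) = H_{g,m}(I₁) ⊖ H_{g,m}(I₁ \ I₀)`. -/
def HgmPerp (g : Fin n → Fin n → ℂ) (v : Fin n → E) (m : ℕ) (I₀ I₁ : Set (Fin n)) :
    Submodule ℂ (PiLp 2 fun _ : Fin m => E) :=
  Hgm E g v m I₁ ⊓ (Hgm E g v m (I₁ \ I₀))ᗮ

/-- The vectors `v` realize the Gram matrix `g`, i.e. `⟪v i, v j⟫ = g j i`
(with Mathlib's inner product, conjugate-linear in the first variable); equivalently,
in the paper's convention, `⟨v j, v i⟩ = g(j,i)`, matching `⟨g_j, g_i⟩_{H_g} = g(j,i)`. -/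
def IsGramRealization (g : Fin n → Fin n → ℂ) (v : Fin n → E) : Prop :=
  ∀ i j, (inner ℂ (v i) (v j) : ℂ) = g j i

theorem LinearMap.apply_mem_of_apply_generator_mem {R M N : Type*} [Semiring R]
    [AddCommMonoid M] [Module R M] [AddCommMonoid N] [Module R N] {s : Set M}
    (f : Submodule.span R s →ₗ[R] N) {p : Submodule R N}
    (hf : ∀ x (hx : x ∈ Submodule.span R s), x ∈ s → f ⟨x, hx⟩ ∈ p) (y : Submodule.span R s) :
    f y ∈ p := by
  have hle : Submodule.span R (((↑) : Submodule.span R s → M) ⁻¹' s) ≤ p.comap f :=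
    Submodule.span_le.2 fun x hx => hf x.1 x.2 hx
  exact hle (by rw [Submodule.span_span_coe_preimage]; trivial)

theorem Submodule.le_orthogonal_inf_orthogonal {𝕜 F : Type*} [RCLike 𝕜] [NormedAddCommGroup F]
    [InnerProductSpace 𝕜 F] (K L : Submodule 𝕜 F) : K ≤ (L ⊓ Kᗮ)ᗮ :=
  K.le_orthogonal_orthogonal.trans (Submodule.orthogonal_le inf_le_right)

theorem IsTgz.coe_sub_apply_mem_Hgm_sdiff {F : Type*} [NormedAddCommGroup F]
    [InnerProductSpace ℂ F] {n m : ℕ} {g : Fin n → Fin n → ℂ} {v : Fin n → F}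
    {I₀ I₁ : Set (Fin n)} {z₁ z₂ : Fin n → Matrix (Fin m) (Fin m) ℂ}
    {T₁ T₂ : Hgm F g v m I₁ →L[ℂ] Hgm F g v m I₁}
    (hT₁ : IsTgz F g v I₁ z₁ T₁) (hT₂ : IsTgz F g v I₁ z₂ T₂) (hz : ∀ i ∈ I₀, z₁ i = z₂ i)
    (y : Hgm F g v m I₁) : (T₁ y : PiLp 2 fun _ : Fin m => F) - T₂ y ∈ Hgm F g v m (I₁ \ I₀) := by
  refine (Hgm F g v m I₁).subtype.comp (T₁ - T₂).toLinearMap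
    |>.apply_mem_of_apply_generator_mem ?_ y
  rintro _ hx ⟨a, i, hi, hgi, rfl⟩
  change (T₁ ⟨_, hx⟩ : PiLp 2 fun _ : Fin m => F) - T₂ ⟨_, hx⟩ ∈ _
  rw [hT₁ i hi hgi a hx, hT₂ i hi hgi a hx]
  by_cases hi₀ : i ∈ I₀
  · simp [hz i hi₀]
  · refine Submodule.subset_span ⟨(z₁ i)ᴴ *ᵥ a - (z₂ i)ᴴ *ᵥ a, i, ⟨hi, hi₀⟩, hgi, ?_⟩
    ext k
    simp [sub_smul]

theorem stmt15 (g : Fin n → Fin n → ℂ)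
    (v : Fin n → E)
    (I₀ I₁ : Set (Fin n))
    (z zt₁ zt₂ : Fin n → Matrix (Fin m) (Fin m) ℂ)
    (hzt₁ : ∀ i ∈ I₀, zt₁ i = z i) (hzt₂ : ∀ i ∈ I₀, zt₂ i = z i)
    (T₁ T₂ : Hgm E g v m I₁ →L[ℂ] Hgm E g v m I₁)
    (hT₁ : IsTgz E g v I₁ zt₁ T₁) (hT₂ : IsTgz E g v I₁ zt₂ T₂) :
    ∀ (x : PiLp 2 fun _ : Fin m => E) (hx : x ∈ HgmPerp E g v m I₀ I₁),
      Submodule.orthogonalProjection (HgmPerp E g v m I₀ I₁) (T₁ ⟨x, hx.1⟩ : PiLp 2 fun _ : Fin m => E) =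
      Submodule.orthogonalProjection (HgmPerp E g v m I₀ I₁) (T₂ ⟨x, hx.1⟩ : PiLp 2 fun _ : Fin m => E) := by
  intro x hx
  have hdiff := hT₁.coe_sub_apply_mem_Hgm_sdiff hT₂ (fun i hi => (hzt₁ i hi).trans (hzt₂ i hi).symm)
    ⟨x, hx.1⟩
  rw [← sub_eq_zero, ← map_sub, Submodule.orthogonalProjectionOnto_eq_zero_iff]
  exact Submodule.le_orthogonal_inf_orthogonal _ _ hdiff
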